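/- arXiv:1907.13557 — 2 statements merged into one kernel-verified Lean document; each statement's English description precedes it below -/
import Mathlib

section
/- The RPSN distance is reparameterization invariant: let R, S : ℝ² → ℝ³ be smooth surfaces on a domain D, and let φ = (μ,ν) : D → D be a diffeomorphism with positive Jacobian determinant |J|. Define Q_S(u,v) = √|S_u × S_v| • S and similarly Q_R, and let S̃ = S ∘ φ, R̃ = R ∘ φ. Then ∬_D ‖Q_{R̃} − Q_{S̃}‖² du dv = ∬_D ‖Q_R − Q_S‖² du dv. -/
/-!
By the chain rule the partial derivatives of `T ∘ φ` are combinations of those of `T` with the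
entries of `Dφ` as coefficients, so their cross product is `det Dφ` times that of `T`, and
`Q_{T ∘ φ} = √|det Dφ| • (Q_T ∘ φ)`. Hence the integrand for `R ∘ φ, S ∘ φ` is `|det Dφ|` times
the integrand for `R, S` composed with `φ`, and the change of variables formula concludes.
-/

open MeasureTheory

noncomputable def cross3 (a b : EuclideanSpace ℝ (Fin 3)) : EuclideanSpace ℝ (Fin 3) :=
  WithLp.toLp 2 ![a 1 * b 2 - a 2 * b 1, a 2 * b 0 - a 0 * b 2, a 0 * b 1 - a 1 * b 0]

/-- The RPSN representation `Q_S(u,v) = √‖S_u × S_v‖ • S(u,v)`. -/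
noncomputable def RPSN (S : ℝ × ℝ → EuclideanSpace ℝ (Fin 3)) (p : ℝ × ℝ) :
    EuclideanSpace ℝ (Fin 3) :=
  Real.sqrt ‖cross3 (fderiv ℝ S p (1, 0)) (fderiv ℝ S p (0, 1))‖ • S p

lemma cross3_smul_add_smul (a b c d : ℝ) (X Y : EuclideanSpace ℝ (Fin 3)) :
    cross3 (a • X + c • Y) (b • X + d • Y) = (a * d - b * c) • cross3 X Y := by
  ext i
  fin_cases i <;> simp [cross3] <;> ring

lemma ContinuousLinearMap.det_eq_apply_prod (L : (ℝ × ℝ) →L[ℝ] ℝ × ℝ) :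
    L.det = (L (1, 0)).1 * (L (0, 1)).2 - (L (0, 1)).1 * (L (1, 0)).2 := by
  rw [ContinuousLinearMap.det, ← LinearMap.det_toMatrix (Module.Basis.finTwoProd ℝ),
    Matrix.det_fin_two]
  simp [LinearMap.toMatrix_apply]

lemma cross3_comp_apply (A : (ℝ × ℝ) →L[ℝ] EuclideanSpace ℝ (Fin 3))
    (L : (ℝ × ℝ) →L[ℝ] ℝ × ℝ) :
    cross3 (A.comp L (1, 0)) (A.comp L (0, 1)) = L.det • cross3 (A (1, 0)) (A (0, 1)) := by
  have hA : ∀ v : ℝ × ℝ, A v = v.1 • A (1, 0) + v.2 • A (0, 1) := fun v => by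
    rw [← map_smul, ← map_smul, ← map_add]
    congr 1
    ext <;> simp
  rw [A.comp_apply, A.comp_apply, hA (L (1, 0)), hA (L (0, 1)), cross3_smul_add_smul,
    L.det_eq_apply_prod]

lemma RPSN_comp {T : ℝ × ℝ → EuclideanSpace ℝ (Fin 3)} {φ : ℝ × ℝ → ℝ × ℝ}
    {L : (ℝ × ℝ) →L[ℝ] ℝ × ℝ} {p : ℝ × ℝ} (hT : DifferentiableAt ℝ T (φ p))
    (hφ : HasFDerivAt φ L p) :
    RPSN (T ∘ φ) p = √|L.det| • RPSN T (φ p) := by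
  rw [RPSN, RPSN, (hT.hasFDerivAt.comp p hφ).fderiv, cross3_comp_apply, norm_smul,
    Real.norm_eq_abs, Real.sqrt_mul (abs_nonneg _), smul_smul, Function.comp_apply]

lemma norm_RPSN_comp_sub_sq {R S : ℝ × ℝ → EuclideanSpace ℝ (Fin 3)} {φ : ℝ × ℝ → ℝ × ℝ}
    {L : (ℝ × ℝ) →L[ℝ] ℝ × ℝ} {p : ℝ × ℝ} (hR : DifferentiableAt ℝ R (φ p))
    (hS : DifferentiableAt ℝ S (φ p)) (hφ : HasFDerivAt φ L p) :
    ‖RPSN (R ∘ φ) p - RPSN (S ∘ φ) p‖ ^ 2 = |L.det| * ‖RPSN R (φ p) - RPSN S (φ p)‖ ^ 2 := by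
  rw [RPSN_comp hR hφ, RPSN_comp hS hφ, ← smul_sub, norm_smul, mul_pow, Real.norm_eq_abs,
    abs_of_nonneg (Real.sqrt_nonneg _), Real.sq_sqrt (abs_nonneg _)]

theorem stmt2_general (D : Set (ℝ × ℝ)) (hD : MeasurableSet D)
    (R S : ℝ × ℝ → EuclideanSpace ℝ (Fin 3)) (μ ν : ℝ × ℝ → ℝ)
    (hR : ContDiff ℝ 1 R) (hS : ContDiff ℝ 1 S)
    (hμ : ContDiff ℝ 1 μ) (hν : ContDiff ℝ 1 ν)
    (φ : ℝ × ℝ → ℝ × ℝ) (hφ : ∀ p, φ p = (μ p, ν p))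
    (hbij : Set.BijOn φ D D) :
    ∫ p in D, ‖RPSN (R ∘ φ) p - RPSN (S ∘ φ) p‖ ^ 2 =
      ∫ p in D, ‖RPSN R p - RPSN S p‖ ^ 2 := by
  set L : ℝ × ℝ → (ℝ × ℝ) →L[ℝ] ℝ × ℝ := fun p => (fderiv ℝ μ p).prod (fderiv ℝ ν p)
  have hφL : ∀ p, HasFDerivAt φ (L p) p := fun p => by
    rw [show φ = fun p => (μ p, ν p) from funext hφ]
    exact (hμ.differentiable one_ne_zero p).hasFDerivAt.prodMk
      (hν.differentiable one_ne_zero p).hasFDerivAt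
  calc ∫ p in D, ‖RPSN (R ∘ φ) p - RPSN (S ∘ φ) p‖ ^ 2
      = ∫ p in D, |(L p).det| • ‖RPSN R (φ p) - RPSN S (φ p)‖ ^ 2 :=
        setIntegral_congr_fun hD fun p _ => norm_RPSN_comp_sub_sq
          (hR.differentiable one_ne_zero _) (hS.differentiable one_ne_zero _) (hφL p)
    _ = ∫ p in φ '' D, ‖RPSN R p - RPSN S p‖ ^ 2 :=
        (integral_image_eq_integral_abs_det_fderiv_smul volume hD
          (fun p _ => (hφL p).hasFDerivWithinAt) hbij.injOn fun q => ‖RPSN R q - RPSN S q‖ ^ 2).symm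
    _ = ∫ p in D, ‖RPSN R p - RPSN S p‖ ^ 2 := by rw [hbij.image_eq]

/-- the RPSN distance is reparameterization invariant. -/
theorem stmt2 (D : Set (ℝ × ℝ)) (hD : MeasurableSet D)
    (R S : ℝ × ℝ → EuclideanSpace ℝ (Fin 3)) (μ ν : ℝ × ℝ → ℝ)
    (hR : ContDiff ℝ 1 R) (hS : ContDiff ℝ 1 S)
    (hμ : ContDiff ℝ 1 μ) (hν : ContDiff ℝ 1 ν)
    (φ : ℝ × ℝ → ℝ × ℝ) (hφ : ∀ p, φ p = (μ p, ν p))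
    (hbij : Set.BijOn φ D D)
    (hJ : ∀ p ∈ D, 0 < fderiv ℝ μ p (1, 0) * fderiv ℝ ν p (0, 1) -
        fderiv ℝ μ p (0, 1) * fderiv ℝ ν p (1, 0)) :
    ∫ p in D, ‖RPSN (R ∘ φ) p - RPSN (S ∘ φ) p‖ ^ 2 =
      ∫ p in D, ‖RPSN R p - RPSN S p‖ ^ 2 :=
  stmt2_general D hD R S μ ν hR hS hμ hν φ hφ hbij
end

section
/- Derivative formula for the RPSN representation: for a smooth regular surface S(u,v) with N = S_u × S_v ≠ 0 and Q = √‖N‖ • S, one has Q_u = √‖N‖ • (S_u + ½(Γ^u_{uu} + Γ^v_{vu}) • S), where Γ^u_{uu} + Γ^v_{vu} = ∂(log‖N‖)/∂u = S_{uu}·S^u + S_{uv}·S^v. -/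
/-!
Since `‖N‖ > 0`, the chain rule gives `(√‖N‖)_u = √‖N‖ · ½ (log ‖N‖)_u`, so the product rule
yields `Q_u = √‖N‖ • (S_u + ½ (log ‖N‖)_u • S)`. Differentiating `N = S_u × S_v` gives
`N_u = S_u × S_vu + S_uu × S_v`, hence `(log ‖N‖)_u = ⟪N, N_u⟫ / ‖N‖²`. By the cyclic symmetry of
the triple product and `S_vu = S_uv` (symmetry of the second derivative), this is
`⟪S_uu, S^u⟫ + ⟪S_uv, S^v⟫` for the dual frame `S^u = ‖N‖⁻¹ S_v × n`, `S^v = ‖N‖⁻¹ n × S_u`.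
-/

open RealInnerProductSpace

local notation "𝔼³" => EuclideanSpace ℝ (Fin 3)

lemma cross3_add_left (a b c : 𝔼³) : cross3 (a + b) c = cross3 a c + cross3 b c := by
  ext i; fin_cases i <;> simp [cross3] <;> ring

lemma cross3_smul_left (r : ℝ) (a b : 𝔼³) : cross3 (r • a) b = r • cross3 a b := by
  ext i; fin_cases i <;> simp [cross3] <;> ring

lemma cross3_add_right (a b c : 𝔼³) : cross3 a (b + c) = cross3 a b + cross3 a c := by
  ext i; fin_cases i <;> simp [cross3] <;> ring

lemma cross3_smul_right (r : ℝ) (a b : 𝔼³) : cross3 a (r • b) = r • cross3 a b := by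
  ext i; fin_cases i <;> simp [cross3] <;> ring

noncomputable def crossCLM : 𝔼³ →L[ℝ] 𝔼³ →L[ℝ] 𝔼³ :=
  LinearMap.toContinuousLinearMap <| LinearMap.toContinuousLinearMap.toLinearMap ∘ₗ
    LinearMap.mk₂ ℝ cross3 cross3_add_left cross3_smul_left cross3_add_right cross3_smul_right

@[simp] lemma crossCLM_apply (a b : 𝔼³) : crossCLM a b = cross3 a b := rfl

lemma inner_smul_cross3_add_inner_smul_cross3 (a b c d N : 𝔼³) (s : ℝ) :
    ⟪c, s • cross3 b (s • N)⟫ + ⟪d, s • cross3 (s • N) a⟫ =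
      s ^ 2 * ⟪N, cross3 a d + cross3 c b⟫ := by
  simp [cross3, PiLp.inner_apply, Fin.sum_univ_three]; ring

section Calculus

variable {E F : Type*} [NormedAddCommGroup E] [NormedSpace ℝ E]

theorem HasFDerivAt.cross3 {f g : E → 𝔼³} {f' g' : E →L[ℝ] 𝔼³} {x : E}
    (hf : HasFDerivAt f f' x) (hg : HasFDerivAt g g' x) :
    HasFDerivAt (fun y => cross3 (f y) (g y))
      (crossCLM.precompR E (f x) g' + crossCLM.precompL E f' (g x)) x :=
  crossCLM.hasFDerivAt_of_bilinear hf hg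

theorem HasFDerivAt.log_norm [NormedAddCommGroup F] [InnerProductSpace ℝ F] {f : E → F}
    {f' : E →L[ℝ] F} {x : E} (hf : HasFDerivAt f f' x) (h0 : f x ≠ 0) :
    HasFDerivAt (fun y => Real.log ‖f y‖) ((‖f x‖ ^ 2)⁻¹ • (innerSL ℝ (f x)).comp f') x := by
  have hsq : (fun y => Real.log ‖f y‖) = fun y => (1 / 2 : ℝ) * Real.log (‖f y‖ ^ 2) := by
    funext y; rw [Real.log_pow]; ring
  rw [hsq]
  refine ((hf.norm_sq.log (by positivity)).const_mul (1 / 2 : ℝ)).congr_fderiv ?_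
  ext v; simp; ring

theorem fderiv_sqrt_smul_apply [NormedAddCommGroup F] [NormedSpace ℝ F] {g : E → ℝ} {S : E → F}
    {x : E} (hg : DifferentiableAt ℝ g x) (hpos : 0 < g x) (hS : DifferentiableAt ℝ S x)
    (v : E) :
    fderiv ℝ (fun y => √(g y) • S y) x v =
      √(g x) • (fderiv ℝ S x v + ((1 / 2) * fderiv ℝ (fun y => Real.log (g y)) x v) • S x) := by
  have hsqrt := hg.hasFDerivAt.sqrt hpos.ne'
  have hprod : HasFDerivAt (fun y => √(g y) • S y) _ x := hsqrt.smul hS.hasFDerivAt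
  rw [hprod.fderiv, (hg.hasFDerivAt.log hpos.ne').fderiv]
  simp only [add_apply, smul_apply, ContinuousLinearMap.smulRight_apply, smul_add, smul_smul,
    smul_eq_mul]
  congr 2
  field_simp
  rw [Real.sq_sqrt hpos.le, mul_comm]

theorem fderiv_fderiv_apply_comm [NormedAddCommGroup F] [NormedSpace ℝ F] {f : E → F} {x : E}
    (hf : ContDiffAt ℝ 2 f x) (v w : E) :
    fderiv ℝ (fun y => fderiv ℝ f y v) x w = fderiv ℝ (fun y => fderiv ℝ f y w) x v := by
  have hdiff : DifferentiableAt ℝ (fderiv ℝ f) x :=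
    (hf.fderiv_right (m := 1) le_rfl).differentiableAt one_ne_zero
  rw [fderiv_clm_apply hdiff (differentiableAt_const v),
    fderiv_clm_apply hdiff (differentiableAt_const w)]
  simpa using hf.isSymmSndFDerivAt (by simp [minSmoothness_of_isRCLikeNormedField]) w v

end Calculus

/-- derivative formula for the RPSN representation
`Q_u = √‖N‖ • (S_u + ½(Γ^u_{uu} + Γ^v_{vu}) • S)` with
`Γ^u_{uu} + Γ^v_{vu} = ∂(log‖N‖)/∂u = S_uu·S^u + S_uv·S^v`. -/
theorem stmt12 (S : ℝ × ℝ → EuclideanSpace ℝ (Fin 3)) (hS : ContDiff ℝ 2 S)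
    (Su Sv : ℝ × ℝ → EuclideanSpace ℝ (Fin 3))
    (hSu : ∀ p, Su p = fderiv ℝ S p (1, 0)) (hSv : ∀ p, Sv p = fderiv ℝ S p (0, 1))
    (Nn : ℝ × ℝ → EuclideanSpace ℝ (Fin 3)) (hN : ∀ p, Nn p = cross3 (Su p) (Sv p))
    (Q : ℝ × ℝ → EuclideanSpace ℝ (Fin 3))
    (hQ : ∀ p, Q p = Real.sqrt ‖Nn p‖ • S p)
    (p₀ : ℝ × ℝ) (hreg : Nn p₀ ≠ 0)
    (n Scu Scv : EuclideanSpace ℝ (Fin 3))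
    (hn : n = ‖Nn p₀‖⁻¹ • Nn p₀)
    (hScu : Scu = ‖Nn p₀‖⁻¹ • cross3 (Sv p₀) n)
    (hScv : Scv = ‖Nn p₀‖⁻¹ • cross3 n (Su p₀)) :
    fderiv ℝ Q p₀ (1, 0) =
      Real.sqrt ‖Nn p₀‖ •
        (Su p₀ + ((1 / 2 : ℝ) *
          (⟪fderiv ℝ Su p₀ (1, 0), Scu⟫ + ⟪fderiv ℝ Su p₀ (0, 1), Scv⟫)) • S p₀) ∧
    fderiv ℝ (fun p => Real.log ‖Nn p‖) p₀ (1, 0) =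
      ⟪fderiv ℝ Su p₀ (1, 0), Scu⟫ + ⟪fderiv ℝ Su p₀ (0, 1), Scv⟫ := by
  have hpartial (v : ℝ × ℝ) : Differentiable ℝ (fun p => fderiv ℝ S p v) :=
    ((hS.fderiv_right le_rfl).differentiable one_ne_zero).clm_apply (differentiable_const v)
  have hSud : Differentiable ℝ Su := funext hSu ▸ hpartial _
  have hSvd : Differentiable ℝ Sv := funext hSv ▸ hpartial _
  have hmixed : fderiv ℝ Sv p₀ (1, 0) = fderiv ℝ Su p₀ (0, 1) := by
    rw [funext hSu, funext hSv]; exact fderiv_fderiv_apply_comm hS.contDiffAt _ _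
  have hNd : HasFDerivAt Nn _ p₀ := funext hN ▸ (hSud p₀).hasFDerivAt.cross3 (hSvd p₀).hasFDerivAt
  have hlog : fderiv ℝ (fun p => Real.log ‖Nn p‖) p₀ (1, 0) =
      ⟪fderiv ℝ Su p₀ (1, 0), Scu⟫ + ⟪fderiv ℝ Su p₀ (0, 1), Scv⟫ := by
    rw [(hNd.log_norm hreg).fderiv, hScu, hScv, hn, inner_smul_cross3_add_inner_smul_cross3]
    simp [hmixed, inner_add_right, mul_add]
  refine ⟨?_, hlog⟩
  rw [funext hQ, fderiv_sqrt_smul_apply (hNd.differentiableAt.norm ℝ hreg) (norm_pos_iff.2 hreg)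
    ((hS.differentiable two_ne_zero) p₀), hlog, hSu]
end
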